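/- arXiv:1210.6612 — 7 statements merged into one kernel-verified Lean document; each statement's English description precedes it below -/
import Mathlib

section
/- If rational numbers x₁, x₂, x₃ satisfy x₁² - 2x₂² + x₃² = 0 (i.e., their squares are in arithmetic progression) with x₂ ≠ 0 and x₁ - 2x₂ + x₃ ≠ 0, then setting t = (x₁ - x₃)/(x₁ - 2x₂ + x₃), one has x₁/x₂ = (t² - 2t - 1)/(t² + 1) and x₃/x₂ = (t² + 2t - 1)/(t² + 1). -/
theorem three_squares_AP_param (x₁ x₂ x₃ : ℚ) (hx₂ : x₂ ≠ 0)
    (hs : x₁ - 2 * x₂ + x₃ ≠ 0) (h : x₁ ^ 2 - 2 * x₂ ^ 2 + x₃ ^ 2 = 0) :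
    x₁ / x₂ = (((x₁ - x₃) / (x₁ - 2 * x₂ + x₃)) ^ 2 - 2 * ((x₁ - x₃) / (x₁ - 2 * x₂ + x₃)) - 1) /
        (((x₁ - x₃) / (x₁ - 2 * x₂ + x₃)) ^ 2 + 1) ∧
      x₃ / x₂ = (((x₁ - x₃) / (x₁ - 2 * x₂ + x₃)) ^ 2 + 2 * ((x₁ - x₃) / (x₁ - 2 * x₂ + x₃)) - 1) /
        (((x₁ - x₃) / (x₁ - 2 * x₂ + x₃)) ^ 2 + 1) := by
  have ht : ((x₁ - x₃) / (x₁ - 2 * x₂ + x₃)) ^ 2 + 1 ≠ 0 := by positivity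
  have hden : (x₁ - x₃) ^ 2 + (x₁ - 2 * x₂ + x₃) ^ 2 ≠ 0 := by positivity
  have h1 : (((x₁ - x₃) / (x₁ - 2 * x₂ + x₃)) ^ 2 - 2 * ((x₁ - x₃) / (x₁ - 2 * x₂ + x₃)) - 1) /
      (((x₁ - x₃) / (x₁ - 2 * x₂ + x₃)) ^ 2 + 1)
      = ((x₁ - x₃) ^ 2 - 2 * (x₁ - x₃) * (x₁ - 2 * x₂ + x₃) - (x₁ - 2 * x₂ + x₃) ^ 2) /
        ((x₁ - x₃) ^ 2 + (x₁ - 2 * x₂ + x₃) ^ 2) := by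
    rw [div_eq_div_iff ht hden]; field_simp
  have h2 : (((x₁ - x₃) / (x₁ - 2 * x₂ + x₃)) ^ 2 + 2 * ((x₁ - x₃) / (x₁ - 2 * x₂ + x₃)) - 1) /
      (((x₁ - x₃) / (x₁ - 2 * x₂ + x₃)) ^ 2 + 1)
      = ((x₁ - x₃) ^ 2 + 2 * (x₁ - x₃) * (x₁ - 2 * x₂ + x₃) - (x₁ - 2 * x₂ + x₃) ^ 2) /
        ((x₁ - x₃) ^ 2 + (x₁ - 2 * x₂ + x₃) ^ 2) := by
    rw [div_eq_div_iff ht hden]; field_simp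
  rw [h1, h2, div_eq_div_iff hx₂ hden, div_eq_div_iff hx₂ hden]
  constructor
  · linear_combination (2 * (x₁ - x₂)) * h
  · linear_combination (2 * (x₃ - x₂)) * h
end

section
/- Let K be a field of characteristic ≠ 2 and δ ∈ K nonzero. If there exist x₁, x₂, x₃ ∈ K with x₂² - δ = x₁² and x₂² + δ = x₃² and x₁ - 2x₂ + x₃ ≠ 0, then there exist X, Y ∈ K with Y ≠ 0 and Y² = X³ - δ²X; explicitly X = (x₁ - x₃)δ/(x₁ - 2x₂ + x₃) and Y = -2δ²/(x₁ - 2x₂ + x₃). -/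
/-!
Write `s = x₁ - 2x₂ + x₃`. Subtracting the two congruum equations gives
`δ s = (x₁ - x₃)(x₂ - x₃)(x₁ - x₂)`; clearing the denominator `s³` and the factor `δ³`, the
curve equation for `X = (x₁ - x₃)δ/s`, `Y = -2δ²/s` becomes `4δs = (x₁ - x₃)((x₁ - x₃)² - s²)`,
which is that identity, since `x₁ - x₃ ∓ s` equals `2(x₂ - x₃)` resp. `2(x₁ - x₂)`.
-/

theorem congruum_mul_sum_eq {R : Type*} [CommRing R] {δ x₁ x₂ x₃ : R}
    (h₁ : x₂ ^ 2 - δ = x₁ ^ 2) (h₃ : x₂ ^ 2 + δ = x₃ ^ 2) :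
    δ * (x₁ - 2 * x₂ + x₃) = (x₁ - x₃) * (x₂ - x₃) * (x₁ - x₂) := by
  linear_combination (x₂ - x₃) * h₁ + (x₁ - x₂) * h₃

theorem congruum_point_on_curve {K : Type*} [Field K] {δ x₁ x₂ x₃ : K}
    (h₁ : x₂ ^ 2 - δ = x₁ ^ 2) (h₃ : x₂ ^ 2 + δ = x₃ ^ 2) (hs : x₁ - 2 * x₂ + x₃ ≠ 0) :
    (-(2 * δ ^ 2) / (x₁ - 2 * x₂ + x₃)) ^ 2 =
      ((x₁ - x₃) * δ / (x₁ - 2 * x₂ + x₃)) ^ 3 -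
        δ ^ 2 * ((x₁ - x₃) * δ / (x₁ - 2 * x₂ + x₃)) := by
  field_simp
  linear_combination 4 * δ ^ 3 * congruum_mul_sum_eq h₁ h₃

theorem congruum_to_elliptic (K : Type*) [Field K] (h2 : (2 : K) ≠ 0)
    (δ : K) (hδ : δ ≠ 0) (x₁ x₂ x₃ : K)
    (h₁ : x₂ ^ 2 - δ = x₁ ^ 2) (h₃ : x₂ ^ 2 + δ = x₃ ^ 2)
    (hs : x₁ - 2 * x₂ + x₃ ≠ 0) :
    ∃ X Y : K, Y ≠ 0 ∧ Y ^ 2 = X ^ 3 - δ ^ 2 * X ∧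
      X = (x₁ - x₃) * δ / (x₁ - 2 * x₂ + x₃) ∧
      Y = -(2 * δ ^ 2) / (x₁ - 2 * x₂ + x₃) := by
  refine ⟨_, _, ?_, congruum_point_on_curve h₁ h₃ hs, rfl, rfl⟩
  exact div_ne_zero (neg_ne_zero.mpr (mul_ne_zero h2 (pow_ne_zero _ hδ))) hs
end

section
/- Let K be a field of characteristic ≠ 2 and δ ∈ K nonzero. If there exist X, Y ∈ K with Y ≠ 0 and Y² = X³ - δ²X, then setting x₁ = (X² - 2δX - δ²)/(2Y), x₂ = (X² + δ²)/(2Y), x₃ = (X² + 2δX - δ²)/(2Y), one has x₂² - δ = x₁² and x₂² + δ = x₃². -/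
theorem elliptic_to_congruum (K : Type*) [Field K] (h2 : (2 : K) ≠ 0)
    (δ : K) (hδ : δ ≠ 0) (X Y : K) (hY : Y ≠ 0) (h : Y ^ 2 = X ^ 3 - δ ^ 2 * X) :
    ((X ^ 2 + δ ^ 2) / (2 * Y)) ^ 2 - δ = ((X ^ 2 - 2 * δ * X - δ ^ 2) / (2 * Y)) ^ 2 ∧
      ((X ^ 2 + δ ^ 2) / (2 * Y)) ^ 2 + δ = ((X ^ 2 + 2 * δ * X - δ ^ 2) / (2 * Y)) ^ 2 := by
  have hYne : (2 * Y) ≠ 0 := mul_ne_zero h2 hY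
  constructor <;> field_simp
  · linear_combination (-4*δ) * h
  · linear_combination (4*δ) * h
end

section
/- Let K be a field of characteristic ≠ 2 and δ ∈ K nonzero. There exist X, Y ∈ K with Y ≠ 0 and Y² = X³ - δ²X if and only if there exist a, b, c ∈ K with a² + b² = c² and (1/2)ab = δ. -/
/-! A point `(X, Y)` with `Y ≠ 0` on `Y² = X³ - δ²X` gives the right triangle with sides
`(X² - δ²)/Y`, `2δX/Y` and hypotenuse `(X² + δ²)/Y`; conversely a right triangle `(a, b, c)` of
area `δ` gives the point `(δ(a + c)/b, 2δ²(a + c)/b²)`. -/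

section

variable {K : Type*} [Field K]

theorem rightTriangle_of_curvePoint {δ X Y : K} (h2 : (2 : K) ≠ 0) (hY : Y ≠ 0)
    (hE : Y ^ 2 = X ^ 3 - δ ^ 2 * X) :
    ((X ^ 2 - δ ^ 2) / Y) ^ 2 + (2 * δ * X / Y) ^ 2 = ((X ^ 2 + δ ^ 2) / Y) ^ 2 ∧
      1 / 2 * ((X ^ 2 - δ ^ 2) / Y) * (2 * δ * X / Y) = δ := by
  constructor
  · field_simp
    ring
  · field_simp
    linear_combination (-δ) * hE

theorem add_ne_zero_of_sq_add_sq_eq_sq {a b c : K} (hb : b ≠ 0) (hpy : a ^ 2 + b ^ 2 = c ^ 2) :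
    a + c ≠ 0 := by
  intro hac
  have hc : c = -a := by linear_combination hac
  have hb2 : b ^ 2 = 0 := by
    rw [hc] at hpy
    linear_combination hpy
  exact hb (pow_eq_zero_iff two_ne_zero |>.mp hb2)

theorem curvePoint_of_rightTriangle {δ a b c : K} (h2 : (2 : K) ≠ 0) (hδ : δ ≠ 0)
    (hpy : a ^ 2 + b ^ 2 = c ^ 2) (hab : a * b = 2 * δ) :
    2 * δ ^ 2 * (a + c) / b ^ 2 ≠ 0 ∧
      (2 * δ ^ 2 * (a + c) / b ^ 2) ^ 2 =
        (δ * (a + c) / b) ^ 3 - δ ^ 2 * (δ * (a + c) / b) := by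
  have hb : b ≠ 0 := by
    rintro rfl
    exact mul_ne_zero h2 hδ (by simpa using hab.symm)
  have hac := add_ne_zero_of_sq_add_sq_eq_sq hb hpy
  refine ⟨by positivity, ?_⟩
  field_simp
  -- `c² - b² = a²` turns `(a + c)² - b²` into `2a(a + c)`, and then `ab = 2δ`.
  linear_combination b * hpy - 2 * (a + c) * hab

end

theorem congruent_number_iff (K : Type*) [Field K] (h2 : (2 : K) ≠ 0)
    (δ : K) (hδ : δ ≠ 0) :
    (∃ X Y : K, Y ≠ 0 ∧ Y ^ 2 = X ^ 3 - δ ^ 2 * X) ↔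
      (∃ a b c : K, a ^ 2 + b ^ 2 = c ^ 2 ∧ (1 / 2) * a * b = δ) := by
  constructor
  · rintro ⟨X, Y, hY, hE⟩
    exact ⟨_, _, _, rightTriangle_of_curvePoint h2 hY hE⟩
  · rintro ⟨a, b, c, hpy, hab⟩
    have hab' : a * b = 2 * δ := by
      rw [← hab]
      field_simp
    exact ⟨_, _, curvePoint_of_rightTriangle h2 hδ hpy hab'⟩
end

section
/- Let K be a field of characteristic ≠ 2, and let x₁, x₂, x₃, x₄ ∈ K satisfy x₁² - 2x₂² + x₃² = 0 and x₂² - 2x₃² + x₄² = 0 with s = x₁ + 3x₂ + 3x₃ + x₄ ≠ 0. Then X = 2(x₁ - 3x₂ - 3x₃ + x₄)/s and Y = 6(x₁ - x₂ + x₃ - x₄)/s satisfy Y² = X³ + 5X² + 4X. -/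
/-!
The quadrics `x₁² - 2x₂² + x₃² = 0` and `x₂² - 2x₃² + x₄² = 0` cut out a genus one curve in `ℙ³`,
and `(x₁ : … : x₄) ↦ (X, Y)` maps it to the Weierstrass model `Y² = X³ + 5X² + 4X`.
Clearing the denominator `s`, the curve equation becomes a homogeneous cubic identity that lies in
the ideal generated by the two quadrics, so it holds over any commutative ring.
-/

theorem sq_mul_eq_cubic_of_sq_arithProg {R : Type*} [CommRing R] {x₁ x₂ x₃ x₄ : R}
    (h₁ : x₁ ^ 2 - 2 * x₂ ^ 2 + x₃ ^ 2 = 0) (h₂ : x₂ ^ 2 - 2 * x₃ ^ 2 + x₄ ^ 2 = 0) :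
    (6 * (x₁ - x₂ + x₃ - x₄)) ^ 2 * (x₁ + 3 * x₂ + 3 * x₃ + x₄) =
      (2 * (x₁ - 3 * x₂ - 3 * x₃ + x₄)) ^ 3 +
        5 * (2 * (x₁ - 3 * x₂ - 3 * x₃ + x₄)) ^ 2 * (x₁ + 3 * x₂ + 3 * x₃ + x₄) +
        4 * (2 * (x₁ - 3 * x₂ - 3 * x₃ + x₄)) * (x₁ + 3 * x₂ + 3 * x₃ + x₄) ^ 2 := by
  linear_combination (144 * x₂ + 288 * x₃ - 144 * x₄) * h₁ +
    (-144 * x₁ + 288 * x₂ + 144 * x₃) * h₂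

theorem div_sq_eq_cubic_of_homogeneous {K : Type*} [Field K] {A B s a b c : K} (hs : s ≠ 0)
    (h : A ^ 2 * s = B ^ 3 + a * B ^ 2 * s + b * B * s ^ 2 + c * s ^ 3) :
    (A / s) ^ 2 = (B / s) ^ 3 + a * (B / s) ^ 2 + b * (B / s) + c := by
  field_simp
  linear_combination h

theorem four_squares_to_elliptic_general (K : Type*) [Field K]
    (x₁ x₂ x₃ x₄ : K)
    (h₁ : x₁ ^ 2 - 2 * x₂ ^ 2 + x₃ ^ 2 = 0) (h₂ : x₂ ^ 2 - 2 * x₃ ^ 2 + x₄ ^ 2 = 0)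
    (hs : x₁ + 3 * x₂ + 3 * x₃ + x₄ ≠ 0) :
    (6 * (x₁ - x₂ + x₃ - x₄) / (x₁ + 3 * x₂ + 3 * x₃ + x₄)) ^ 2 =
      (2 * (x₁ - 3 * x₂ - 3 * x₃ + x₄) / (x₁ + 3 * x₂ + 3 * x₃ + x₄)) ^ 3 +
        5 * (2 * (x₁ - 3 * x₂ - 3 * x₃ + x₄) / (x₁ + 3 * x₂ + 3 * x₃ + x₄)) ^ 2 +
        4 * (2 * (x₁ - 3 * x₂ - 3 * x₃ + x₄) / (x₁ + 3 * x₂ + 3 * x₃ + x₄)) := by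
  refine (div_sq_eq_cubic_of_homogeneous (c := 0) hs ?_).trans (add_zero _)
  linear_combination sq_mul_eq_cubic_of_sq_arithProg h₁ h₂

theorem four_squares_to_elliptic (K : Type*) [Field K] (h2 : (2 : K) ≠ 0)
    (x₁ x₂ x₃ x₄ : K)
    (h₁ : x₁ ^ 2 - 2 * x₂ ^ 2 + x₃ ^ 2 = 0) (h₂ : x₂ ^ 2 - 2 * x₃ ^ 2 + x₄ ^ 2 = 0)
    (hs : x₁ + 3 * x₂ + 3 * x₃ + x₄ ≠ 0) :
    (6 * (x₁ - x₂ + x₃ - x₄) / (x₁ + 3 * x₂ + 3 * x₃ + x₄)) ^ 2 =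
      (2 * (x₁ - 3 * x₂ - 3 * x₃ + x₄) / (x₁ + 3 * x₂ + 3 * x₃ + x₄)) ^ 3 +
        5 * (2 * (x₁ - 3 * x₂ - 3 * x₃ + x₄) / (x₁ + 3 * x₂ + 3 * x₃ + x₄)) ^ 2 +
        4 * (2 * (x₁ - 3 * x₂ - 3 * x₃ + x₄) / (x₁ + 3 * x₂ + 3 * x₃ + x₄)) :=
  four_squares_to_elliptic_general K x₁ x₂ x₃ x₄ h₁ h₂ hs
end

section
/- Let K be a field of characteristic ≠ 2 and let Disc(t) = c₀' + c₁'t + c₂'t² be a quadratic polynomial over K. Suppose t ∈ K with Disc(t) = w² for some nonzero w ∈ K, and set c₁ = Disc'(t)/Disc(t), c₂ = Disc''(t)/(2·Disc(t)). If u ∈ K satisfies u² ≠ c₂, then δ = (c₁ − 2u)/(u² − c₂) satisfies Disc(t + δ) = (w(δu + 1))², i.e., Disc(t+δ) is a square in K. -/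
/-! Expanding around `t`, `Disc (t + δ) = Disc t * (1 + c₁ δ + c₂ δ²)`. The conic
`y² = 1 + c₁ x + c₂ x²` has the rational point `(0, 1)`; the line `y = u x + 1` through it meets
the conic again at `x = δ`, so the bracket is `(δ u + 1)²` and `Disc t = w²` makes the whole
product a square. -/

theorem quadratic_eval_add {R : Type*} [CommRing R] (c₀ c₁ c₂ t δ : R) :
    c₀ + c₁ * (t + δ) + c₂ * (t + δ) ^ 2 =
      (c₀ + c₁ * t + c₂ * t ^ 2) + (c₁ + 2 * c₂ * t) * δ + c₂ * δ ^ 2 := by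
  ring

theorem quadratic_eval_add_eq_mul {K : Type*} [Field K] {c₀ c₁ c₂ t : K}
    (hD : c₀ + c₁ * t + c₂ * t ^ 2 ≠ 0) (δ : K) :
    c₀ + c₁ * (t + δ) + c₂ * (t + δ) ^ 2 =
      (c₀ + c₁ * t + c₂ * t ^ 2) * (1 + (c₁ + 2 * c₂ * t) / (c₀ + c₁ * t + c₂ * t ^ 2) * δ +
        c₂ / (c₀ + c₁ * t + c₂ * t ^ 2) * δ ^ 2) := by
  rw [quadratic_eval_add, mul_add, mul_add, mul_one, ← mul_assoc, ← mul_assoc,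
    mul_div_cancel₀ _ hD, mul_div_cancel₀ _ hD]

theorem one_add_mul_add_mul_sq_eq_sq {R : Type*} [CommRing R] {a b δ u : R}
    (h : δ * (u ^ 2 - b) = a - 2 * u) :
    1 + a * δ + b * δ ^ 2 = (δ * u + 1) ^ 2 := by
  linear_combination (-δ) * h

theorem disc_square_propagates_general (K : Type*) [Field K]
    (c₀' c₁' c₂' t w u : K) (hw : w ≠ 0)
    (ht : c₀' + c₁' * t + c₂' * t ^ 2 = w ^ 2)
    (hu : u ^ 2 ≠ c₂' / (c₀' + c₁' * t + c₂' * t ^ 2)) :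
    c₀' + c₁' * (t + ((c₁' + 2 * c₂' * t) / (c₀' + c₁' * t + c₂' * t ^ 2) - 2 * u) /
          (u ^ 2 - c₂' / (c₀' + c₁' * t + c₂' * t ^ 2))) +
        c₂' * (t + ((c₁' + 2 * c₂' * t) / (c₀' + c₁' * t + c₂' * t ^ 2) - 2 * u) /
          (u ^ 2 - c₂' / (c₀' + c₁' * t + c₂' * t ^ 2))) ^ 2 =
      (w * (((c₁' + 2 * c₂' * t) / (c₀' + c₁' * t + c₂' * t ^ 2) - 2 * u) /
          (u ^ 2 - c₂' / (c₀' + c₁' * t + c₂' * t ^ 2)) * u + 1)) ^ 2 := by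
  have hD : c₀' + c₁' * t + c₂' * t ^ 2 ≠ 0 := ht ▸ pow_ne_zero 2 hw
  have hδ := div_mul_cancel₀ ((c₁' + 2 * c₂' * t) / (c₀' + c₁' * t + c₂' * t ^ 2) - 2 * u)
    (sub_ne_zero.mpr hu)
  rw [quadratic_eval_add_eq_mul hD, one_add_mul_add_mul_sq_eq_sq hδ, mul_pow, ht]

theorem disc_square_propagates (K : Type*) [Field K] (h2 : (2 : K) ≠ 0)
    (c₀' c₁' c₂' t w u : K) (hw : w ≠ 0)
    (ht : c₀' + c₁' * t + c₂' * t ^ 2 = w ^ 2)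
    (hu : u ^ 2 ≠ c₂' / (c₀' + c₁' * t + c₂' * t ^ 2)) :
    c₀' + c₁' * (t + ((c₁' + 2 * c₂' * t) / (c₀' + c₁' * t + c₂' * t ^ 2) - 2 * u) /
          (u ^ 2 - c₂' / (c₀' + c₁' * t + c₂' * t ^ 2))) +
        c₂' * (t + ((c₁' + 2 * c₂' * t) / (c₀' + c₁' * t + c₂' * t ^ 2) - 2 * u) /
          (u ^ 2 - c₂' / (c₀' + c₁' * t + c₂' * t ^ 2))) ^ 2 =
      (w * (((c₁' + 2 * c₂' * t) / (c₀' + c₁' * t + c₂' * t ^ 2) - 2 * u) /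
          (u ^ 2 - c₂' / (c₀' + c₁' * t + c₂' * t ^ 2)) * u + 1)) ^ 2 :=
  disc_square_propagates_general K c₀' c₁' c₂' t w u hw ht hu
end

section
/- Let K be a field of characteristic ≠ 2 and A, B ∈ K nonzero with C = A + B ≠ 0. If X, Y ∈ K with Y ≠ 0 satisfy Y² = X(X − A)(X + B), then a = (X² + (B−A)X − AB)/Y, b = CX/Y, c = (X² + AB)/Y satisfy a² − 2ab·cosθ + b² = c², where cosθ = (B − A)/C, and (ab·sinθ)² = 4AB where sinθ satisfies sin²θ + cos²θ = 1 with sinθ = 2√(AB)/C (i.e., (ab)²(1 − ((B−A)/C)²) = 4AB). -/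
/-!
The three sides are the numerators `X² + (B - A)X - AB`, `CX`, `X² + AB` scaled by `1/Y`, and
the law of cosines is homogeneous, so the first claim is a polynomial identity in `X` which does
not involve the curve. For the second, `X² + (B - A)X - AB = (X - A)(X + B)`, so the curve equation
`Y² = X(X - A)(X + B)` makes the product of the first two sides equal to `C`; as
`1 - cos²θ = 4AB/C²`, the area identity follows.
-/

section

variable {K : Type*} [Field K]

lemma law_of_cosines_div {a b c k : K}
    (h : a ^ 2 - 2 * a * b * k + b ^ 2 = c ^ 2) (Y : K) :
    (a / Y) ^ 2 - 2 * (a / Y) * (b / Y) * k + (b / Y) ^ 2 = (c / Y) ^ 2 :=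
  calc (a / Y) ^ 2 - 2 * (a / Y) * (b / Y) * k + (b / Y) ^ 2
      = (a ^ 2 - 2 * a * b * k + b ^ 2) / Y ^ 2 := by ring
    _ = (c / Y) ^ 2 := by rw [h, div_pow]

lemma frey_law_of_cosines {A B : K} (hC : A + B ≠ 0) (X : K) :
    (X ^ 2 + (B - A) * X - A * B) ^ 2 -
        2 * (X ^ 2 + (B - A) * X - A * B) * ((A + B) * X) * ((B - A) / (A + B)) +
        ((A + B) * X) ^ 2 = (X ^ 2 + A * B) ^ 2 := by
  field_simp
  ring

lemma one_sub_sq_sub_div_add {A B : K} (hC : A + B ≠ 0) :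
    1 - ((B - A) / (A + B)) ^ 2 = 4 * (A * B) / (A + B) ^ 2 := by
  field_simp
  ring

lemma frey_sides_mul {A B X Y : K} (hY : Y ≠ 0)
    (h : Y ^ 2 = X * (X - A) * (X + B)) :
    (X ^ 2 + (B - A) * X - A * B) / Y * ((A + B) * X / Y) = A + B := by
  have hnum : (X ^ 2 + (B - A) * X - A * B) * ((A + B) * X) = (A + B) * Y ^ 2 := by
    linear_combination -(A + B) * h
  rw [div_mul_div_comm, hnum, ← sq, mul_div_cancel_right₀ _ (pow_ne_zero 2 hY)]
end

theorem frey_curve_to_triangle_general (K : Type*) [Field K]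
    (A B : K) (hC : A + B ≠ 0)
    (X Y : K) (hY : Y ≠ 0) (h : Y ^ 2 = X * (X - A) * (X + B)) :
    ((X ^ 2 + (B - A) * X - A * B) / Y) ^ 2 -
        2 * ((X ^ 2 + (B - A) * X - A * B) / Y) * ((A + B) * X / Y) * ((B - A) / (A + B)) +
        ((A + B) * X / Y) ^ 2 = ((X ^ 2 + A * B) / Y) ^ 2 ∧
      (((X ^ 2 + (B - A) * X - A * B) / Y) * ((A + B) * X / Y)) ^ 2 *
          (1 - ((B - A) / (A + B)) ^ 2) = 4 * (A * B) := by
  refine ⟨law_of_cosines_div (frey_law_of_cosines hC X) Y, ?_⟩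
  rw [frey_sides_mul hY h, one_sub_sq_sub_div_add hC]
  field_simp

theorem frey_curve_to_triangle (K : Type*) [Field K] (h2 : (2 : K) ≠ 0)
    (A B : K) (hA : A ≠ 0) (hB : B ≠ 0) (hC : A + B ≠ 0)
    (X Y : K) (hY : Y ≠ 0) (h : Y ^ 2 = X * (X - A) * (X + B)) :
    ((X ^ 2 + (B - A) * X - A * B) / Y) ^ 2 -
        2 * ((X ^ 2 + (B - A) * X - A * B) / Y) * ((A + B) * X / Y) * ((B - A) / (A + B)) +
        ((A + B) * X / Y) ^ 2 = ((X ^ 2 + A * B) / Y) ^ 2 ∧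
      (((X ^ 2 + (B - A) * X - A * B) / Y) * ((A + B) * X / Y)) ^ 2 *
          (1 - ((B - A) / (A + B)) ^ 2) = 4 * (A * B) :=
  frey_curve_to_triangle_general K A B hC X Y hY h
end
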